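/- Let E > 0 and let u, v : [0,E] → ℝ² be continuous maps with |u(s)| = 1 and |v(s)| = 1 for all s ∈ [0,E], and suppose ∫₀^E u(s) ds = ∫₀^E v(s) ds. Then the ranges of u and v intersect: there exist s, σ ∈ [0,E] with u(s) = v(σ). -/

import Mathlib

/-!
If the ranges were disjoint, the range of `u` would be a compact connected subset of the unit
circle missing a point, hence a closed arc `{exp (t i) : |t - ψ| ≤ r}` with `r < π`, obtained by
lifting `u` continuously to an angle. On the circle this arc is exactly the cap
`cos r ≤ Re (z exp (-ψ i))`, so the real-linear functional `z ↦ Re (z exp (-ψ i))` is `≥ cos r`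
along `u` and `< cos r` along `v`. Integrating over `[0, E]` separates the two integrals.
-/

open Real Set Complex

def circleArc (ψ r : ℝ) : Set ℂ :=
  (fun t : ℝ => Complex.exp (t * I)) '' Icc (ψ - r) (ψ + r)

lemma exp_arg_mul_I_of_norm_eq_one {z : ℂ} (hz : ‖z‖ = 1) : Complex.exp (arg z * I) = z := by
  simpa [hz] using norm_mul_exp_arg_mul_I z

lemma re_exp_mul_I_mul_exp_neg (t ψ : ℝ) :
    (Complex.exp (t * I) * Complex.exp (-(ψ * I))).re = Real.cos (t - ψ) := by
  rw [← Complex.exp_add, show (t : ℂ) * I + -(ψ * I) = ((t - ψ : ℝ) : ℂ) * I by push_cast; ring,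
    exp_ofReal_mul_I_re]

lemma cos_le_cos_iff_abs_le {r t : ℝ} (hr0 : 0 ≤ r) (hrπ : r ≤ π) (ht : |t| ≤ π) :
    Real.cos r ≤ Real.cos t ↔ |t| ≤ r := by
  rw [← Real.cos_abs t]
  exact Real.strictAntiOn_cos.le_iff_ge ⟨hr0, hrπ⟩ ⟨abs_nonneg t, ht⟩

lemma mem_circleArc_iff {z : ℂ} (hz : ‖z‖ = 1) {ψ r : ℝ} (hr0 : 0 ≤ r) (hrπ : r ≤ π) :
    z ∈ circleArc ψ r ↔ Real.cos r ≤ (z * Complex.exp (-(ψ * I))).re := by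
  constructor
  · rintro ⟨t, ht, rfl⟩
    rw [re_exp_mul_I_mul_exp_neg, cos_le_cos_iff_abs_le hr0 hrπ] <;>
      rw [abs_le] <;> constructor <;> linarith [ht.1, ht.2]
  · intro h
    set w := z * Complex.exp (-(ψ * I)) with hw_def
    have hw : ‖w‖ = 1 := by simp [w, hz, Complex.norm_exp]
    have hre : w.re = Real.cos (arg w) := by
      rw [Complex.cos_arg (norm_ne_zero_iff.1 (hw.trans_ne one_ne_zero)), hw, div_one]
    rw [hre, cos_le_cos_iff_abs_le hr0 hrπ (abs_arg_le_pi w), abs_le] at h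
    refine ⟨ψ + arg w, ⟨by linarith, by linarith⟩, ?_⟩
    dsimp only
    rw [ofReal_add, add_mul, Complex.exp_add, exp_arg_mul_I_of_norm_eq_one hw, hw_def,
      mul_left_comm, ← Complex.exp_add, add_neg_cancel, Complex.exp_zero, mul_one]

theorem exists_eq_circleArc_of_isConnected {K : Set ℂ} (hKc : IsCompact K)
    (hKconn : IsConnected K) (hK1 : K ⊆ Metric.sphere 0 1) {p : ℂ} (hp : ‖p‖ = 1) (hpK : p ∉ K) :
    ∃ ψ r, 0 ≤ r ∧ r < π ∧ K = circleArc ψ r := by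
  have hp0 : -p ≠ 0 := neg_ne_zero.2 (norm_ne_zero_iff.1 (hp.trans_ne one_ne_zero))
  have hnorm : ∀ z ∈ K, ‖z / -p‖ = 1 := fun z hz => by
    rw [norm_div, norm_neg, hp, mem_sphere_zero_iff_norm.1 (hK1 hz), div_one]
  have harg : ∀ z ∈ K, arg (z / -p) ≠ π := by
    intro z hz h
    have : z / -p = -1 := by
      rw [← exp_arg_mul_I_of_norm_eq_one (hnorm z hz), h, exp_pi_mul_I]
    rw [div_eq_iff hp0, neg_one_mul, neg_neg] at this
    exact hpK (this ▸ hz)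
  set θ : ℂ → ℝ := fun z => arg (-p) + arg (z / -p)
  have hθexp : ∀ z ∈ K, Complex.exp (θ z * I) = z := by
    intro z hz
    rw [ofReal_add, add_mul, Complex.exp_add, exp_arg_mul_I_of_norm_eq_one (by rwa [norm_neg]),
      exp_arg_mul_I_of_norm_eq_one (hnorm z hz), mul_div_cancel₀ _ hp0]
  have hθcont : ContinuousOn θ K := by
    intro z hz
    have hslit : z / -p ∈ slitPlane :=
      mem_slitPlane_iff_arg.2 ⟨harg z hz, norm_ne_zero_iff.1 ((hnorm z hz).trans_ne one_ne_zero)⟩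
    exact (continuousAt_const.add ((continuousAt_arg hslit).comp (f := fun z => z / -p)
      (continuous_id.div_const (-p)).continuousAt)).continuousWithinAt
  have hθK : θ '' K ⊆ Ioo (arg (-p) - π) (arg (-p) + π) := by
    rintro _ ⟨z, hz, rfl⟩
    simp only [θ]
    exact ⟨by linarith [neg_pi_lt_arg (z / -p)],
      by linarith [(arg_le_pi (z / -p)).lt_of_ne (harg z hz)]⟩
  have hIcc :=
    eq_Icc_of_connected_compact (hKconn.image θ hθcont) (hKc.image_of_continuousOn hθcont)
  set a := sInf (θ '' K)
  set b := sSup (θ '' K)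
  have hab : a ≤ b := nonempty_Icc.1 (hIcc ▸ hKconn.nonempty.image θ)
  have ha := hθK (hIcc ▸ left_mem_Icc.2 hab)
  have hb := hθK (hIcc ▸ right_mem_Icc.2 hab)
  refine ⟨(a + b) / 2, (b - a) / 2, by linarith, by linarith [ha.1, hb.2], ?_⟩
  rw [circleArc, show (a + b) / 2 - (b - a) / 2 = a by ring,
    show (a + b) / 2 + (b - a) / 2 = b by ring, ← hIcc, image_image, image_congr hθexp, image_id']

lemma exists_le_apply_of_intervalIntegral_eq {F : Type*} [NormedAddCommGroup F] [NormedSpace ℝ F]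
    [CompleteSpace F] {E c : ℝ} (hE : 0 < E) {u v : ℝ → F} (hu : ContinuousOn u (Icc 0 E))
    (hv : ContinuousOn v (Icc 0 E)) (hint : ∫ s in (0 : ℝ)..E, u s = ∫ s in (0 : ℝ)..E, v s)
    (ℓ : F →L[ℝ] ℝ) (hℓu : ∀ s ∈ Icc 0 E, c ≤ ℓ (u s)) : ∃ σ ∈ Icc 0 E, c ≤ ℓ (v σ) := by
  by_contra! hℓv
  have h0 : (0 : ℝ) ∈ Icc 0 E := left_mem_Icc.2 hE.le
  have hcomm : ∀ w : ℝ → F, ContinuousOn w (Icc 0 E) →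
      ∫ s in (0 : ℝ)..E, ℓ (w s) = ℓ (∫ s in (0 : ℝ)..E, w s) := fun w hw =>
    ℓ.intervalIntegral_comp_comm (hw.intervalIntegrable_of_Icc hE.le)
  have hlt : ∫ s in (0 : ℝ)..E, ℓ (v s) < ∫ _ in (0 : ℝ)..E, c :=
    intervalIntegral.integral_lt_integral_of_continuousOn_of_le_of_exists_lt hE
      (ℓ.continuous.comp_continuousOn hv) continuousOn_const
      (fun s hs => (hℓv s (Ioc_subset_Icc_self hs)).le) ⟨0, h0, hℓv 0 h0⟩
  have hle : ∫ _ in (0 : ℝ)..E, c ≤ ∫ s in (0 : ℝ)..E, ℓ (u s) :=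
    intervalIntegral.integral_mono_on hE.le intervalIntegrable_const
      ((ℓ.continuous.comp_continuousOn hu).intervalIntegrable_of_Icc hE.le) hℓu
  rw [hcomm u hu, hint, ← hcomm v hv] at hle
  exact hle.not_gt hlt

theorem exists_eq_of_intervalIntegral_eq_of_norm_eq_one {E : ℝ} (hE : 0 < E) {u v : ℝ → ℂ}
    (hu : ContinuousOn u (Icc 0 E)) (hv : ContinuousOn v (Icc 0 E))
    (hu1 : ∀ s ∈ Icc 0 E, ‖u s‖ = 1) (hv1 : ∀ s ∈ Icc 0 E, ‖v s‖ = 1)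
    (hint : ∫ s in (0 : ℝ)..E, u s = ∫ s in (0 : ℝ)..E, v s) :
    ∃ s ∈ Icc 0 E, ∃ σ ∈ Icc 0 E, u s = v σ := by
  by_contra! hne
  have h0 : (0 : ℝ) ∈ Icc 0 E := left_mem_Icc.2 hE.le
  obtain ⟨ψ, r, hr0, hrπ, harc⟩ := exists_eq_circleArc_of_isConnected
    (isCompact_Icc.image_of_continuousOn hu) ((isConnected_Icc hE.le).image u hu)
    (image_subset_iff.2 fun s hs => mem_sphere_zero_iff_norm.2 (hu1 s hs)) (hv1 0 h0)
    fun ⟨s, hs, h⟩ => hne s hs 0 h0 h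
  let ℓ : ℂ →L[ℝ] ℝ := reCLM.comp ((ContinuousLinearMap.mul ℝ ℂ).flip (Complex.exp (-(ψ * I))))
  have hmem : ∀ z, ‖z‖ = 1 → (z ∈ u '' Icc 0 E ↔ Real.cos r ≤ ℓ z) := fun z hz => by
    rw [harc]
    exact mem_circleArc_iff hz hr0 hrπ.le
  obtain ⟨σ, hσ, hvσ⟩ := exists_le_apply_of_intervalIntegral_eq hE hu hv hint ℓ
    fun s hs => (hmem _ (hu1 s hs)).1 (mem_image_of_mem u hs)
  obtain ⟨s, hs, h⟩ := (hmem _ (hv1 σ hσ)).2 hvσ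
  exact hne s hs σ hσ h

/-- two continuous unit-circle-valued maps on `[0,E]` with equal integrals
have intersecting ranges. -/
theorem stmt_9 (E : ℝ) (hE : 0 < E)
    (u v : ℝ → EuclideanSpace ℝ (Fin 2))
    (hu : ContinuousOn u (Set.Icc 0 E)) (hv : ContinuousOn v (Set.Icc 0 E))
    (hu1 : ∀ s ∈ Set.Icc (0:ℝ) E, ‖u s‖ = 1) (hv1 : ∀ s ∈ Set.Icc (0:ℝ) E, ‖v s‖ = 1)
    (hint : (∫ s in (0:ℝ)..E, u s) = ∫ s in (0:ℝ)..E, v s) :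
    ∃ s ∈ Set.Icc (0:ℝ) E, ∃ σ ∈ Set.Icc (0:ℝ) E, u s = v σ := by
  let e : EuclideanSpace ℝ (Fin 2) ≃ₗᵢ[ℝ] ℂ := Complex.orthonormalBasisOneI.repr.symm
  obtain ⟨s, hs, σ, hσ, h⟩ := exists_eq_of_intervalIntegral_eq_of_norm_eq_one hE
    (e.continuous.comp_continuousOn hu) (e.continuous.comp_continuousOn hv)
    (fun s hs => (e.norm_map _).trans (hu1 s hs)) (fun s hs => (e.norm_map _).trans (hv1 s hs))
    ((e.toLinearIsometry.intervalIntegral_comp_comm u).trans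
      ((congrArg e hint).trans (e.toLinearIsometry.intervalIntegral_comp_comm v).symm))
  exact ⟨s, hs, σ, hσ, e.injective h⟩
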